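/- arXiv:1611.01562 — 15 statements merged into one kernel-verified Lean document; each statement's English description precedes it below -/
import Mathlib

section
/- Let R be a ring. The following are equivalent: (i) R is reduced; (ii) R is reduced and Armendariz; (iii) R is reduced and skew-Armendariz; (iv) the polynomial ring Polynomial R is reduced. -/
section Aux

variable {R : Type*} [Ring R] [IsReduced R]

/-- In a reduced ring, `a * b = 0` implies `b * a = 0`. -/
private lemma aux_mul_symm {a b : R} (h : a * b = 0) : b * a = 0 := by
  have h2 : (b * a) * (b * a) = 0 := by
    rw [mul_assoc b a (b * a), ← mul_assoc a b a, h, zero_mul, mul_zero]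
  exact IsReduced.eq_zero _ ⟨2, by rwa [pow_two]⟩

/-- Armendariz's lemma: a reduced ring is Armendariz. -/
private lemma aux_armendariz (f g : Polynomial R) (h : f * g = 0) :
    ∀ i j : ℕ, f.coeff i * g.coeff j = 0 := by
  suffices H : ∀ k, ∀ i j, i + j = k → f.coeff i * g.coeff j = 0 by
    intro i j; exact H (i + j) i j rfl
  intro k
  induction k using Nat.strong_induction_on with
  | _ k IH =>
    suffices H2 : ∀ m, m ≤ k → f.coeff m * g.coeff (k - m) = 0 by
      intro i j hij
      have := H2 i (by omega)
      rwa [show k - i = j by omega] at this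
    intro m
    induction m using Nat.strong_induction_on with
    | _ m IHm =>
      intro hm
      have hsum : ∑ i ∈ Finset.range (k + 1), f.coeff i * g.coeff (k - i) = 0 := by
        have hc := Polynomial.coeff_mul f g k
        rw [h, Polynomial.coeff_zero, Finset.Nat.sum_antidiagonal_eq_sum_range_succ_mk] at hc
        exact hc.symm
      have hsum2 : ∑ i ∈ Finset.range (k + 1),
          f.coeff i * g.coeff (k - i) * f.coeff m = 0 := by
        rw [← Finset.sum_mul, hsum, zero_mul]
      have hterm : ∀ i ∈ Finset.range (k + 1), i ≠ m →
          f.coeff i * g.coeff (k - i) * f.coeff m = 0 := by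
        intro i hi hne
        simp only [Finset.mem_range] at hi
        rcases lt_or_gt_of_ne hne with hlt | hgt
        · rw [IHm i hlt (by omega), zero_mul]
        · have h0 : f.coeff m * g.coeff (k - i) = 0 :=
            IH (m + (k - i)) (by omega) m (k - i) rfl
          rw [mul_assoc, aux_mul_symm h0, mul_zero]
      have hkey : f.coeff m * g.coeff (k - m) * f.coeff m = 0 := by
        rw [← Finset.sum_eq_single_of_mem m (by simp; omega) hterm]
        exact hsum2
      have hsq : (f.coeff m * g.coeff (k - m)) * (f.coeff m * g.coeff (k - m)) = 0 := by
        rw [mul_assoc, ← mul_assoc (g.coeff (k - m)), ← mul_assoc, ← mul_assoc,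
          hkey, zero_mul]
      exact IsReduced.eq_zero _ ⟨2, by rwa [pow_two]⟩

/-- If a reduced ring, square-zero polynomials are zero. -/
private lemma aux_sq_zero (p : Polynomial R) (h : p * p = 0) : p = 0 := by
  ext n
  have := aux_armendariz p p h n n
  simpa using IsReduced.eq_zero _ ⟨2, by rwa [pow_two]⟩

/-- A reduced ring has reduced polynomial ring. -/
private lemma aux_poly_reduced : IsReduced (Polynomial R) := by
  constructor
  rintro p ⟨n, hn⟩
  induction n using Nat.strong_induction_on generalizing p with
  | _ n IH =>
    match n with
    | 0 =>
      have : (1 : Polynomial R) = 0 := by simpa using hn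
      calc p = p * 1 := (mul_one p).symm
        _ = 0 := by rw [this, mul_zero]
    | 1 => simpa using hn
    | (n + 2) =>
      have hsq : p ^ (n + 1) * p ^ (n + 1) = 0 := by
        rw [← pow_add, show (n + 1) + (n + 1) = (n + 2) + n by omega, pow_add, hn, zero_mul]
      have := aux_sq_zero _ hsq
      exact IH (n + 1) (by omega) p this

end Aux

/-- For a ring `R` the following are equivalent:
(i) `R` is reduced; (ii) `R` is reduced and Armendariz; (iii) `R` is reduced and
skew-Armendariz; (iv) `Polynomial R` is reduced. -/
theorem reduced_armendariz_skewArmendariz_tfae (R : Type*) [Ring R] :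
    [ IsReduced R,
      IsReduced R ∧ (∀ f g : Polynomial R, f * g = 0 →
        ∀ i j : ℕ, f.coeff i * g.coeff j = 0),
      IsReduced R ∧ (∀ f g : Polynomial R, f * g = 0 →
        ∀ j : ℕ, f.coeff 0 * g.coeff j = 0),
      IsReduced (Polynomial R) ].TFAE := by
  tfae_have 1 → 2 := fun h => ⟨h, fun f g hfg => aux_armendariz f g hfg⟩
  tfae_have 2 → 3 := fun ⟨h1, h2⟩ => ⟨h1, fun f g hfg j => h2 f g hfg 0 j⟩
  tfae_have 3 → 1 := fun h => h.1
  tfae_have 1 → 4 := fun h => aux_poly_reduced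
  tfae_have 4 → 1 := by
    intro h
    constructor
    intro x hx
    have : IsNilpotent (Polynomial.C x) := hx.map Polynomial.C
    have := IsReduced.eq_zero _ this
    exact Polynomial.C_injective (by simpa using this)
  tfae_finish
end

section
/- Let R be a ring and n a natural number. The following are equivalent: (i) R is reduced and n-skew-Armendariz; (ii) R is reduced; (iii) the ring A_n is reduced. -/
/-!
A reduced ring is reversible: `a * b = 0` gives `(b * a) ^ 2 = 0`. Hence, if `f * g = 0`, multiply
the `m`-th coefficient `∑_{s + t = m} f s * g t` of `f * g` on the right by `f 0`: by well-founded
induction on `m` and reversibility, every term with `s ≠ 0` vanishes, leaving `(f 0 * g m) ^ 2 = 0`.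
For a polynomial `p` with `p ^ 2 = 0`, the square of its leading coefficient for a monomial order
is a coefficient of `p ^ 2`, so it vanishes and `p = 0`. Conversely `R` embeds as the constants.
-/

open AddMonoidAlgebra Finset.HasAntidiagonal

section

variable {R : Type*} [Ring R] [IsReduced R]

theorem IsReduced.mul_eq_zero_comm {a b : R} : a * b = 0 ↔ b * a = 0 := by
  have swap (x y : R) (h : x * y = 0) : y * x = 0 := eq_zero_of_pow_eq_zero (n := 2) <| by
    rw [sq, mul_assoc, ← mul_assoc x, h, zero_mul, mul_zero]
  exact ⟨swap a b, swap b a⟩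

theorem AddMonoidAlgebra.isReduced_of_injective_add {A B : Type*} [AddMonoid A] [LinearOrder B]
    [OrderBot B] [Add B] [AddLeftStrictMono B] [AddRightStrictMono B] (D : A → B)
    (hD : D.Injective) (hadd : ∀ a₁ a₂, D (a₁ + a₂) = D a₁ + D a₂) : IsReduced R[A] := by
  refine (isReduced_iff_pow_one_lt 2 one_lt_two).2 fun p hp => ?_
  have hlead : p.leadingCoeff D ^ 2 = 0 := by
    rw [sq, ← coeff_supDegree_add_supDegree hD hadd, ← sq, hp]
    rfl
  exact (leadingCoeff_eq_zero hD).1 (eq_zero_of_pow_eq_zero hlead)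

theorem AddMonoidAlgebra.coeff_zero_mul_coeff_eq_zero_of_mul_eq_zero {M : Type*}
    [AddCommMonoid M] [IsRightCancelAdd M] [PartialOrder M] [CanonicallyOrderedAdd M]
    [WellFoundedLT M] [Finset.HasAntidiagonal M] {f g : R[M]} (h : f * g = 0) (m : M) :
    f.coeff 0 * g.coeff m = 0 := by
  induction m using WellFoundedLT.induction with
  | _ m ih =>
  have hsum : ∑ p ∈ antidiagonal m, f.coeff p.1 * g.coeff p.2 * f.coeff 0 = 0 := by
    rw [← Finset.sum_mul, ← coeff_mul_antidiag f g m _ mem_antidiagonal, h]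
    exact zero_mul _
  rw [Finset.sum_eq_single_of_mem (0, m) (mem_antidiagonal.2 (zero_add m)) ?_] at hsum
  · exact eq_zero_of_pow_eq_zero (n := 2) (by rw [sq, ← mul_assoc, hsum, zero_mul])
  · rintro ⟨s, t⟩ hst hne
    rw [mem_antidiagonal] at hst
    have hs : s ≠ 0 := by rintro rfl; exact hne (by rw [← hst, zero_add])
    have ht : t < m := hst ▸ lt_add_of_pos_left t (pos_of_ne_zero hs)
    rw [mul_assoc, IsReduced.mul_eq_zero_comm.1 (ih t ht), mul_zero]

end

/-- For a ring `R` and `n : ℕ`, with `A_n = AddMonoidAlgebra R (Fin n →₀ ℕ)`,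
the following are equivalent: (i) `R` is reduced and `n`-skew-Armendariz;
(ii) `R` is reduced; (iii) `A_n` is reduced. -/
theorem reduced_nSkewArmendariz_tfae (R : Type*) [Ring R] (n : ℕ) :
    [ IsReduced R ∧ (∀ f g : AddMonoidAlgebra R (Fin n →₀ ℕ), f * g = 0 →
        ∀ m : Fin n →₀ ℕ, f.coeff 0 * g.coeff m = 0),
      IsReduced R,
      IsReduced (AddMonoidAlgebra R (Fin n →₀ ℕ)) ].TFAE := by
  tfae_have 1 → 2 := And.left
  tfae_have 2 → 1 := fun _ =>
    ⟨‹_›, fun _ _ hfg => coeff_zero_mul_coeff_eq_zero_of_mul_eq_zero hfg⟩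
  tfae_have 2 → 3 := fun _ => isReduced_of_injective_add toLex toLex.injective fun _ _ => rfl
  tfae_have 3 → 2 := fun _ =>
    isReduced_of_injective (singleZeroRingHom (M := Fin n →₀ ℕ)) single_right_injective
  tfae_finish
end

section
/- Let R be a skew-Armendariz ring. Then every idempotent of the polynomial ring Polynomial R is a constant polynomial: if e ∈ Polynomial R satisfies e * e = e, then there exists e₀ ∈ R with e₀ * e₀ = e₀ and e = Polynomial.C e₀. -/
/-- If `R` is skew-Armendariz, then every idempotent of `Polynomial R`
is a constant polynomial given by an idempotent of `R`. -/
theorem idempotent_of_skewArmendariz_is_constant (R : Type*) [Ring R]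
    (hSA : ∀ f g : Polynomial R, f * g = 0 → ∀ j : ℕ, f.coeff 0 * g.coeff j = 0)
    (e : Polynomial R) (he : e * e = e) :
    ∃ e₀ : R, e₀ * e₀ = e₀ ∧ e = Polynomial.C e₀ := by
  have h1 : (1 - e) * e = 0 := by rw [sub_mul, one_mul, he, sub_self]
  have h2 : e * (1 - e) = 0 := by rw [mul_sub, mul_one, he, sub_self]
  have hA := hSA (1 - e) e h1
  have hB := hSA e (1 - e) h2
  have hzero : ∀ j, 0 < j → e.coeff j = 0 := by
    intro j hj
    have hAj := hA j
    have hBj := hB j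
    simp only [Polynomial.coeff_sub, Polynomial.coeff_one, hj.ne', if_false, reduceIte,
      zero_sub, mul_neg, neg_eq_zero, sub_mul, one_mul, sub_eq_zero] at hAj hBj
    rw [hAj, hBj]
  refine ⟨e.coeff 0, ?_, ?_⟩
  · have := congrArg (fun p => Polynomial.coeff p 0) he
    simpa [Polynomial.mul_coeff_zero] using this
  · ext j
    rcases Nat.eq_zero_or_pos j with h | h
    · simp [h]
    · rw [hzero j h, Polynomial.coeff_C, if_neg h.ne']
end

section
/- Let R be a ring, n ≥ 1, and suppose R is n-skew-Armendariz. Then every idempotent of A_n is a constant polynomial: if e ∈ A_n satisfies e * e = e, then e m = 0 for every nonzero exponent vector m : Fin n →₀ ℕ. -/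
/-! Apply the hypothesis to the two factorizations `e * (1 - e) = 0` and `(1 - e) * e = 0` of zero:
at a nonzero exponent `m` they give `e₀ * e_m = 0` and `(1 - e₀) * e_m = 0`, and adding them
yields `e_m = 0`. -/

namespace AddMonoidAlgebra

variable {R M : Type*} [Ring R] [AddMonoid M]

theorem coeff_one_of_ne_zero {m : M} (hm : m ≠ 0) : (1 : R[M]).coeff m = 0 := by
  simp [one_def, hm.symm]

theorem coeff_eq_zero_of_isIdempotentElem
    (hA : ∀ f g : R[M], f * g = 0 → ∀ m : M, f.coeff 0 * g.coeff m = 0)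
    {e : R[M]} (he : IsIdempotentElem e) {m : M} (hm : m ≠ 0) : e.coeff m = 0 := by
  have left : e.coeff 0 * e.coeff m = 0 := by
    simpa [coeff_sub, coeff_one_of_ne_zero hm] using hA _ _ he.mul_one_sub_self m
  have right : (1 - e.coeff 0) * e.coeff m = 0 := by
    simpa [coeff_sub] using hA _ _ he.one_sub_mul_self m
  simpa [sub_mul, left] using right

end AddMonoidAlgebra

theorem idempotent_of_nSkewArmendariz_is_constant_general (R : Type*) [Ring R] (n : ℕ)
    (hSA : ∀ f g : AddMonoidAlgebra R (Fin n →₀ ℕ), f * g = 0 →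
      ∀ m : Fin n →₀ ℕ, f.coeff 0 * g.coeff m = 0)
    (e : AddMonoidAlgebra R (Fin n →₀ ℕ)) (he : e * e = e) :
    ∀ m : Fin n →₀ ℕ, m ≠ 0 → e.coeff m = 0 :=
  fun _ hm => AddMonoidAlgebra.coeff_eq_zero_of_isIdempotentElem hSA he hm

/-- If `R` is `n`-skew-Armendariz (`n ≥ 1`), then every idempotent of
`A_n = AddMonoidAlgebra R (Fin n →₀ ℕ)` is a constant polynomial: its coefficient at
every nonzero exponent vector vanishes. -/
theorem idempotent_of_nSkewArmendariz_is_constant (R : Type*) [Ring R] (n : ℕ)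
    (hn : 1 ≤ n)
    (hSA : ∀ f g : AddMonoidAlgebra R (Fin n →₀ ℕ), f * g = 0 →
      ∀ m : Fin n →₀ ℕ, f.coeff 0 * g.coeff m = 0)
    (e : AddMonoidAlgebra R (Fin n →₀ ℕ)) (he : e * e = e) :
    ∀ m : Fin n →₀ ℕ, m ≠ 0 → e.coeff m = 0 :=
  idempotent_of_nSkewArmendariz_is_constant_general R n hSA e he
end

section
/- Every weak skew-Armendariz ring is Abelian: if R is weak skew-Armendariz, then every idempotent e ∈ R (e * e = e) commutes with every element of R. -/
open Polynomial

/-- Every weak skew-Armendariz ring is Abelian: every idempotent is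
central. -/
theorem weakSkewArmendariz_abelian (R : Type*) [Ring R]
    (hWSA : ∀ f g : Polynomial R, f.degree ≤ 1 → g.degree ≤ 1 → f * g = 0 →
      ∀ j : ℕ, f.coeff 0 * g.coeff j = 0)
    (e : R) (he : e * e = e) (r : R) : e * r = r * e := by
  have he' : ∀ x : R, e * (e * x) = e * x := fun x => by rw [← mul_assoc, he]
  have key : ∀ a b c d : R, a * c = 0 → b * c + a * d = 0 → b * d = 0 → a * d = 0 := by
    intro a b c d h1 h2 h3
    have hf : (C b * X + C a : Polynomial R).degree ≤ 1 := degree_linear_le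
    have hg : (C d * X + C c : Polynomial R).degree ≤ 1 := degree_linear_le
    have hmul : (C b * X + C a) * (C d * X + C c) = (0 : Polynomial R) := by
      have expand : (C b * X + C a) * (C d * X + C c)
          = C (b * d) * X ^ 2 + C (b * c + a * d) * X + C (a * c) := by
        simp only [map_add, map_mul, sq, add_mul, mul_add, ← mul_assoc]
        rw [mul_assoc (C b) X (C d), X_mul_C, mul_assoc (C b) X (C c), X_mul_C,
          ← mul_assoc, ← mul_assoc]
        abel
      rw [expand, h1, h2, h3]
      simp
    have h := hWSA _ _ hf hg hmul 1
    simpa using h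
  have hz1 : e * (1 - e) = 0 := by rw [mul_sub, mul_one, he, sub_self]
  have hz2 : (1 - e) * e = 0 := by rw [sub_mul, one_mul, he, sub_self]
  have h1e : (1 - e) * (1 - e) = 1 - e := by
    rw [sub_mul, one_mul, mul_sub, mul_one, he]; abel
  have h1 : e * r * (1 - e) = 0 := by
    have := key e (e * r * (1 - e)) (1 - e) (-(e * r * (1 - e)))
      hz1
      (by rw [mul_assoc, h1e, mul_neg, mul_assoc, he', add_neg_cancel])
      (by rw [mul_neg, neg_eq_zero, mul_assoc (e * r) (1 - e), ← mul_assoc (1 - e),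
            ← mul_assoc (1 - e), hz2, zero_mul, zero_mul, mul_zero])
    rw [mul_neg, mul_assoc, he', neg_eq_zero, ← mul_assoc] at this
    exact this
  have h2 : (1 - e) * r * e = 0 := by
    have := key (1 - e) ((1 - e) * r * e) e (-((1 - e) * r * e))
      hz2
      (by rw [mul_assoc, he, mul_neg, mul_assoc, ← mul_assoc (1 - e) (1 - e), h1e,
            add_neg_cancel])
      (by rw [mul_neg, neg_eq_zero, mul_assoc ((1 - e) * r) e, ← mul_assoc e,
            ← mul_assoc e, hz1, zero_mul, zero_mul, mul_zero])
    rw [mul_neg, mul_assoc, ← mul_assoc (1 - e) (1 - e), h1e, neg_eq_zero,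
      ← mul_assoc] at this
    exact this
  have e1 : e * r = e * r * e := by
    have := h1
    rw [mul_sub, mul_one, sub_eq_zero] at this
    exact this
  have e2 : r * e = e * r * e := by
    have h2' := h2
    rw [sub_mul, one_mul, sub_mul, sub_eq_zero] at h2'
    exact h2'
  rw [e1]
  exact e2.symm
end

section
/- Let R be a ring and n ≥ 1. Suppose that for all f, g ∈ A_n supported on exponent vectors of total degree at most 1 (i.e. f and g are of the form c₀ + c₁x₁ + ⋯ + cₙxₙ), f * g = 0 implies f 0 * g m = 0 for every exponent vector m of total degree at most 1. Then R is Abelian: every idempotent of R is central. -/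
/-!
Take `f = p + c x` and `g = q + d x` in a single variable `x` of `A_n`, so that
`f g = p q + (p d + c q) x + c d x²` and the hypothesis says that `f g = 0` forces `p d = 0`.
For an idempotent `e` and any `a` with `e a = a` and `a e = 0` we have `a² = 0`, so
`f = e + a x`, `g = (1 - e) - a x` multiply to zero and `a = -e (-a) = 0`.
Applying this to `a = e r (1 - e)` and, with `1 - e` in place of `e`, to `a = (1 - e) r e`
gives `e r = e r e = r e`.
-/

def LinearWeakArmendariz (R : Type*) [Semiring R] : Prop :=
  ∀ p q c d : R, p * q = 0 → p * d + c * q = 0 → c * d = 0 → p * d = 0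

namespace LinearWeakArmendariz

variable {R : Type*} [Ring R]

theorem eq_zero_of_mul_eq_self_of_mul_eq_zero (h : LinearWeakArmendariz R) {e a : R}
    (he : IsIdempotentElem e) (hea : e * a = a) (hae : a * e = 0) : a = 0 := by
  have haa : a * a = 0 := by
    calc a * a = a * (e * a) := by rw [hea]
      _ = 0 := by rw [← mul_assoc, hae, zero_mul]
  have := h e (1 - e) a (-a) he.mul_one_sub_self
    (by rw [mul_neg, hea, mul_one_sub, hae, sub_zero, neg_add_cancel]) (by rw [mul_neg, haa, neg_zero])
  rwa [mul_neg, hea, neg_eq_zero] at this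

theorem commute_of_isIdempotentElem (h : LinearWeakArmendariz R) {e : R}
    (he : IsIdempotentElem e) (r : R) : Commute e r := by
  have hleft : e * r * (1 - e) = 0 := by
    refine h.eq_zero_of_mul_eq_self_of_mul_eq_zero he ?_ ?_
    · rw [← mul_assoc, ← mul_assoc, he.eq]
    · rw [mul_assoc, he.one_sub_mul_self, mul_zero]
  have hright : (1 - e) * r * e = 0 := by
    refine h.eq_zero_of_mul_eq_self_of_mul_eq_zero he.one_sub ?_ ?_
    · rw [← mul_assoc, ← mul_assoc, he.one_sub.eq]
    · rw [mul_assoc, he.mul_one_sub_self, mul_zero]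
  rw [mul_one_sub, sub_eq_zero] at hleft
  rw [one_sub_mul, sub_mul, sub_eq_zero] at hright
  exact hleft.trans hright.symm

end LinearWeakArmendariz

namespace AddMonoidAlgebra

variable {R M : Type*} [Semiring R] [AddMonoid M]

theorem single_zero_add_single_mul_single_zero_add_single (u : M) (p q c d : R) :
    (single 0 p + single u c) * (single 0 q + single u d) =
      single 0 (p * q) + single u (p * d + c * q) + single (u + u) (c * d) := by
  simp only [add_mul, mul_add, single_mul_single, zero_add, add_zero, single_add]
  abel

theorem eq_zero_or_eq_of_coeff_single_zero_add_single_ne_zero {u m : M} {p c : R}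
    (hm : (single 0 p + single u c).coeff m ≠ 0) : m = 0 ∨ m = u := by
  by_contra! hne
  simp [coeff_add, coeff_single, hne.1.symm, hne.2.symm] at hm

end AddMonoidAlgebra

open AddMonoidAlgebra in
theorem linearWeakArmendariz_of_addMonoidAlgebra {R : Type*} [Semiring R] {n : ℕ} (i : Fin n)
    (hWSA : ∀ f g : AddMonoidAlgebra R (Fin n →₀ ℕ),
      (∀ m : Fin n →₀ ℕ, f.coeff m ≠ 0 → (m.sum fun _ k => k) ≤ 1) →
      (∀ m : Fin n →₀ ℕ, g.coeff m ≠ 0 → (m.sum fun _ k => k) ≤ 1) →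
      f * g = 0 →
      ∀ m : Fin n →₀ ℕ, (m.sum fun _ k => k) ≤ 1 → f.coeff 0 * g.coeff m = 0) :
    LinearWeakArmendariz R := by
  intro p q c d hpq hmid hcd
  set u : Fin n →₀ ℕ := Finsupp.single i 1
  have hu : u ≠ 0 := Finsupp.single_ne_zero.mpr one_ne_zero
  have hdeg_u : (u.sum fun _ k => k) ≤ 1 := by simp [u, Finsupp.sum_single_index]
  have hlinear (x y : R) (m : Fin n →₀ ℕ) (hm : (single 0 x + single u y).coeff m ≠ 0) :
      (m.sum fun _ k => k) ≤ 1 := by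
    obtain rfl | rfl := eq_zero_or_eq_of_coeff_single_zero_add_single_ne_zero hm
    · simp
    · exact hdeg_u
  have hfg : (single 0 p + single u c) * (single 0 q + single u d) = 0 := by
    rw [single_zero_add_single_mul_single_zero_add_single, hpq, hmid, hcd]
    simp
  have := hWSA _ _ (hlinear p c) (hlinear q d) hfg u hdeg_u
  simpa [coeff_add, coeff_single, Finsupp.single_apply, hu, hu.symm] using this

/-- If `R` satisfies the weak skew-Armendariz condition with respect to
`A_n = AddMonoidAlgebra R (Fin n →₀ ℕ)` (`n ≥ 1`), i.e. for all `f, g ∈ A_n` supported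
on exponent vectors of total degree at most 1, `f * g = 0` implies `f 0 * g m = 0`
for every exponent vector `m` of total degree at most 1, then `R` is Abelian. -/
theorem weak_nSkewArmendariz_abelian (R : Type*) [Ring R] (n : ℕ) (hn : 1 ≤ n)
    (hWSA : ∀ f g : AddMonoidAlgebra R (Fin n →₀ ℕ),
      (∀ m : Fin n →₀ ℕ, f.coeff m ≠ 0 → (m.sum fun _ k => k) ≤ 1) →
      (∀ m : Fin n →₀ ℕ, g.coeff m ≠ 0 → (m.sum fun _ k => k) ≤ 1) →
      f * g = 0 →
      ∀ m : Fin n →₀ ℕ, (m.sum fun _ k => k) ≤ 1 → f.coeff 0 * g.coeff m = 0) :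
    ∀ e : R, e * e = e → ∀ r : R, e * r = r * e := fun _ he r =>
  (linearWeakArmendariz_of_addMonoidAlgebra ⟨0, hn⟩ hWSA).commute_of_isIdempotentElem he r
end

section
/- If R is a skew-Armendariz ring, then the polynomial ring Polynomial R is Abelian: every idempotent of Polynomial R is central in Polynomial R. -/
open Polynomial

lemma key_aux (R : Type*) [Ring R]
    (hSA : ∀ f g : Polynomial R, f * g = 0 → ∀ j : ℕ, f.coeff 0 * g.coeff j = 0)
    (u a : R) (hu : u * u = u) (hua : u * a = a) (hau : a * u = 0) : a = 0 := by
  have haa : a * a = 0 := by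
    calc a * a = a * (u * a) := by rw [hua]
    _ = a * u * a := by rw [mul_assoc]
    _ = 0 := by rw [hau, zero_mul]
  set p : Polynomial R := C u + C a * X with hp
  have hcomm : ∀ b : R, (X : Polynomial R) * C b = C b * X := fun b => X_mul_C b
  have e1 : (C u : Polynomial R) * C u = C u := by rw [← C_mul, hu]
  have e2 : (C u : Polynomial R) * (C a * X) = C a * X := by rw [← mul_assoc, ← C_mul, hua]
  have e3 : (C a * X : Polynomial R) * C u = 0 := by
    rw [mul_assoc, hcomm, ← mul_assoc, ← C_mul, hau, map_zero, zero_mul]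
  have e4 : (C a * X : Polynomial R) * (C a * X) = 0 := by
    rw [mul_assoc, ← mul_assoc X, hcomm, mul_assoc (C a), ← mul_assoc, ← C_mul, haa,
      map_zero, zero_mul]
  have hpp : p * p = p := by
    rw [hp, add_mul, mul_add, mul_add, e1, e2, e3, e4, add_zero, add_zero]
  have h0 : p * (1 - p) = 0 := by rw [mul_sub, mul_one, hpp, sub_self]
  have h1 := hSA p (1 - p) h0 1
  simp [hp, coeff_one] at h1
  rw [hua] at h1
  exact h1

/-- If `R` is skew-Armendariz, then `Polynomial R` is Abelian: every
idempotent of `Polynomial R` is central. -/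
theorem polynomial_abelian_of_skewArmendariz (R : Type*) [Ring R]
    (hSA : ∀ f g : Polynomial R, f * g = 0 → ∀ j : ℕ, f.coeff 0 * g.coeff j = 0) :
    ∀ e : Polynomial R, e * e = e → ∀ f : Polynomial R, e * f = f * e := by
  intro e he f
  set u : R := e.coeff 0 with hu0
  have hu : u * u = u := by
    have := congrArg (fun p => Polynomial.coeff p 0) he
    simpa [Polynomial.mul_coeff_zero] using this
  have h1 : (1 - e) * e = 0 := by rw [sub_mul, one_mul, he, sub_self]
  have h2 : e * (1 - e) = 0 := by rw [mul_sub, mul_one, he, sub_self]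
  have hj : ∀ j, j ≠ 0 → e.coeff j = 0 := by
    intro j hjne
    have b1 : e.coeff j = u * e.coeff j := by
      have h := hSA (1 - e) e h1 j
      simp only [coeff_sub, coeff_one, if_true, sub_mul, one_mul, sub_eq_zero] at h
      exact h
    have b2 : u * e.coeff j = 0 := by
      have h := hSA e (1 - e) h2 j
      simpa [coeff_one, hjne] using h
    rw [b1, b2]
  have heC : e = C u := by
    ext n
    rcases eq_or_ne n 0 with rfl | hn
    · simp [hu0]
    · simp [hj n hn, coeff_C, hn]
  have hL : ∀ x : R, u * (u * x) = u * x := fun x => by rw [← mul_assoc, hu]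
  have hR : ∀ x : R, (x * u) * u = x * u := fun x => by rw [mul_assoc, hu]
  have hcentral : ∀ r : R, u * r = r * u := by
    intro r
    have k1 : u * r - u * (r * u) = 0 := by
      apply key_aux R hSA u (u * r - u * (r * u)) hu
      · rw [mul_sub, hL, hL]
      · rw [sub_mul, mul_assoc, mul_assoc, hR r, sub_self]
    have k2 : r * u - u * (r * u) = 0 := by
      have hv : (1 - u) * (1 - u) = 1 - u := by
        rw [sub_mul, one_mul, mul_sub, mul_one, hu, sub_self, sub_zero]
      apply key_aux R hSA (1 - u) (r * u - u * (r * u)) hv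
      · rw [sub_mul, one_mul, mul_sub, hL, sub_self, sub_zero]
      · rw [mul_sub, mul_one, sub_mul, hR r, mul_assoc, hR r, sub_self]
    rw [sub_eq_zero] at k1 k2
    rw [k1, ← k2]
  rw [heC]
  ext n
  rw [coeff_C_mul, coeff_mul_C, hcentral]
end

section
/- Let R be a commutative ring and Q a commutative R-algebra which is the localization of R at its submonoid of non-zero-divisors (IsLocalization (nonZeroDivisors R) Q), i.e. Q is the total ring of quotients of R. Then R is weak skew-Armendariz if and only if Q is weak skew-Armendariz. -/
/-! A polynomial over the localization becomes, after multiplication by a suitable non-zero-divisor,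
the image of a polynomial over `R` of no larger degree. Clearing denominators of `f` and `g` thus
transports `f * g = 0` to `R`, and the resulting relation between coefficients returns to the
localization because the denominators are units there. Conversely, `R` embeds in its localization
and the weak skew-Armendariz property passes to subrings. -/

def WeakSkewArmendariz (T : Type*) [Ring T] : Prop :=
  ∀ f g : Polynomial T, f.degree ≤ 1 → g.degree ≤ 1 → f * g = 0 →
    ∀ j : ℕ, f.coeff 0 * g.coeff j = 0

open Polynomial

theorem WeakSkewArmendariz.of_injective {R S : Type*} [Ring R] [Ring S] {φ : R →+* S}
    (hφ : Function.Injective φ) (hS : WeakSkewArmendariz S) : WeakSkewArmendariz R := by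
  intro f g hf hg hfg j
  apply hφ
  simpa [coeff_map] using hS (f.map φ) (g.map φ) (degree_map_le.trans hf)
    (degree_map_le.trans hg) (by rw [← Polynomial.map_mul, hfg, Polynomial.map_zero]) j

theorem IsLocalization.degree_integerNormalization_le {R : Type*} [CommRing R] (M : Submonoid R)
    {S : Type*} [CommRing S] [Algebra R S] [IsLocalization M S] (p : S[X]) :
    (integerNormalization M p).degree ≤ p.degree :=
  degree_mono (integerNormalization_support M p)

theorem WeakSkewArmendariz.isLocalization {R : Type*} [CommRing R] {M : Submonoid R}
    (hM : M ≤ nonZeroDivisors R) (S : Type*) [CommRing S] [Algebra R S] [IsLocalization M S]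
    (hR : WeakSkewArmendariz R) : WeakSkewArmendariz S := by
  intro f g hf hg hfg j
  have hinj : Function.Injective (algebraMap R S) := IsLocalization.injective S hM
  obtain ⟨b, hb, hF⟩ := IsLocalization.integerNormalization_spec M f
  obtain ⟨c, hc, hG⟩ := IsLocalization.integerNormalization_spec M g
  set F := IsLocalization.integerNormalization M f
  set G := IsLocalization.integerNormalization M g
  have hFG : F * G = 0 := by
    apply map_injective _ hinj
    rw [Polynomial.map_mul, hF, hG, smul_mul_smul_comm, hfg, smul_zero, Polynomial.map_zero]
  have hcoeff := congrArg (algebraMap R S) <| hR F G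
    ((IsLocalization.degree_integerNormalization_le M f).trans hf)
    ((IsLocalization.degree_integerNormalization_le M g).trans hg) hFG j
  rw [map_mul, map_zero, ← coeff_map, ← coeff_map, hF, hG, coeff_smul, coeff_smul,
    smul_mul_smul_comm, Algebra.smul_def] at hcoeff
  exact (IsLocalization.map_units S (⟨b * c, M.mul_mem hb hc⟩ : M)).mul_right_eq_zero.mp hcoeff

/-- For a commutative ring `R` with total ring of quotients `Q`
(the localization at the non-zero-divisors), `R` is weak skew-Armendariz iff `Q` is. -/
theorem weakSkewArmendariz_iff_totalQuotientRing (R Q : Type*) [CommRing R] [CommRing Q]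
    [Algebra R Q] [IsLocalization (nonZeroDivisors R) Q] :
    WeakSkewArmendariz R ↔ WeakSkewArmendariz Q :=
  ⟨WeakSkewArmendariz.isLocalization le_rfl Q,
    WeakSkewArmendariz.of_injective (IsLocalization.injective Q le_rfl)⟩
end

section
/- If R is a quasi-Baer ring, then the polynomial ring Polynomial R is a quasi-Baer ring. -/
/-!
If `I q = 0` for an ideal `I` of `R[X]`, then already `I * C (q.coeff j) = 0` for every `j`.
For the leading coefficient `c` of `q`: the leading coefficients of `I` lie in the ideal
`A = ℓ(RcR)`; if `r(A) = eR`, then `e c = c` and `A e = 0`, so right multiplication by `C e`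
lowers the degree of every element of `I`, and by induction on the degree `I * C e = 0`, whence
`I * C c = I * C e * C c = 0`. Removing the leading term of `q` handles the other coefficients.

Now let `J` be the left annihilator of the ideal of `R` generated by the coefficients of `r(I)`.
The coefficients of elements of `I` lie in `J`, so if `r(J) = eR` then `r(I) = C e * R[X]`.
-/

/-- A ring `T` is quasi-Baer if the right annihilator of every two-sided ideal of `T`
equals `eT` for some idempotent `e ∈ T`. -/
def IsQuasiBaer (T : Type*) [Ring T] : Prop :=
  ∀ I : TwoSidedIdeal T, ∃ e : T, e * e = e ∧
    {x : T | ∀ a ∈ I, a * x = 0} = {x : T | e * x = x}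

theorem isQuasiBaer_iff {T : Type*} [Ring T] :
    IsQuasiBaer T ↔ ∀ I : TwoSidedIdeal T, ∃ e : T, IsIdempotentElem e ∧
      (∀ a ∈ I, a * e = 0) ∧ ∀ x, (∀ a ∈ I, a * x = 0) → e * x = x := by
  refine forall_congr' fun I => exists_congr fun e => ?_
  constructor
  · rintro ⟨he, hI⟩
    have hr : ∀ x, (∀ a ∈ I, a * x = 0) ↔ e * x = x := fun x => Set.ext_iff.mp hI x
    exact ⟨he, (hr e).mpr he, fun x => (hr x).mp⟩
  · rintro ⟨he, hIe, hfix⟩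
    refine ⟨he, Set.ext fun x => ⟨hfix x, fun hx a ha => ?_⟩⟩
    rw [← show e * x = x from hx, ← mul_assoc, hIe a ha, zero_mul]

open Polynomial TwoSidedIdeal

section

variable {R : Type*} [Ring R]

namespace TwoSidedIdeal

def leftAnnihilatorOfSpan (S : Set R) : TwoSidedIdeal R :=
  .mk' {a | ∀ x ∈ S, ∀ r, a * r * x = 0}
    (fun x _ r => by rw [zero_mul, zero_mul])
    (fun ha hb x hx r => by rw [add_mul, add_mul, ha x hx r, hb x hx r, add_zero])
    (fun ha x hx r => by rw [neg_mul, neg_mul, ha x hx r, neg_zero])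
    (fun {s a} ha x hx r => by rw [mul_assoc s, mul_assoc, ha x hx r, mul_zero])
    (fun {a s} ha x hx r => by rw [mul_assoc a, ha x hx])

theorem mem_leftAnnihilatorOfSpan {S : Set R} {a : R} :
    a ∈ leftAnnihilatorOfSpan S ↔ ∀ x ∈ S, ∀ r, a * r * x = 0 :=
  mem_mk' ..

end TwoSidedIdeal

namespace Polynomial

theorem natDegree_mul_C_lt {g : R[X]} {a : R} (ha : g.leadingCoeff * a = 0)
    (h0 : g * C a ≠ 0) : (g * C a).natDegree < g.natDegree :=
  (natDegree_mul_C_le g a).lt_of_ne fun h =>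
    h0 <| leadingCoeff_eq_zero.mp <| by rw [leadingCoeff, h, coeff_mul_C]; exact ha

theorem mul_C_eq_zero_of_leadingCoeff_mul_eq_zero {I : TwoSidedIdeal R[X]} {e : R}
    (he : IsIdempotentElem e) (hI : ∀ g ∈ I, g.leadingCoeff * e = 0) {g : R[X]} (hg : g ∈ I) :
    g * C e = 0 := by
  suffices g * C e * C e = 0 by rwa [mul_assoc, ← C_mul, he.eq] at this
  by_cases h0 : g * C e = 0
  · rw [h0, zero_mul]
  have : (g * C e).natDegree < g.natDegree := natDegree_mul_C_lt (hI g hg) h0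
  exact mul_C_eq_zero_of_leadingCoeff_mul_eq_zero he hI (I.mul_mem_right _ _ hg)
termination_by g.natDegree

variable {I : TwoSidedIdeal R[X]}

theorem leadingCoeff_mul_mul_leadingCoeff_eq_zero {q : R[X]} (hq : ∀ f ∈ I, f * q = 0)
    {g : R[X]} (hg : g ∈ I) (r : R) : g.leadingCoeff * r * q.leadingCoeff = 0 := by
  have h := congrArg (coeff · (g.natDegree + q.natDegree)) (hq _ (I.mul_mem_right _ (C r) hg))
  simp only [coeff_zero] at h
  rwa [coeff_mul_add_eq_of_natDegree_le (natDegree_mul_C_le g r) le_rfl, coeff_mul_C] at h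

theorem mul_C_leadingCoeff_eq_zero (hR : IsQuasiBaer R) {q : R[X]} (hq : ∀ f ∈ I, f * q = 0)
    {f : R[X]} (hf : f ∈ I) : f * C q.leadingCoeff = 0 := by
  obtain ⟨e, he, hAe, hfix⟩ :=
    isQuasiBaer_iff.mp hR (leftAnnihilatorOfSpan {q.leadingCoeff})
  have hlead (g : R[X]) (hg : g ∈ I) :
      g.leadingCoeff ∈ leftAnnihilatorOfSpan {q.leadingCoeff} :=
    mem_leftAnnihilatorOfSpan.mpr fun _ hx r => by
      rw [Set.mem_singleton_iff.mp hx]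
      exact leadingCoeff_mul_mul_leadingCoeff_eq_zero hq hg r
  have hec : e * q.leadingCoeff = q.leadingCoeff :=
    hfix _ fun a ha => by simpa using mem_leftAnnihilatorOfSpan.mp ha _ rfl 1
  have hfe : f * C e = 0 :=
    mul_C_eq_zero_of_leadingCoeff_mul_eq_zero he (fun g hg => hAe _ (hlead g hg)) hf
  rw [← hec, C_mul, ← mul_assoc, hfe, zero_mul]

theorem mul_eraseLead_eq_zero (hR : IsQuasiBaer R) {q : R[X]} (hq : ∀ f ∈ I, f * q = 0)
    {f : R[X]} (hf : f ∈ I) : f * q.eraseLead = 0 := by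
  rw [← self_sub_C_mul_X_pow, mul_sub, ← mul_assoc, hq f hf,
    mul_C_leadingCoeff_eq_zero hR hq hf, zero_mul, sub_zero]

theorem mul_C_coeff_eq_zero (hR : IsQuasiBaer R) {q : R[X]} (hq : ∀ f ∈ I, f * q = 0)
    {f : R[X]} (hf : f ∈ I) (j : ℕ) : f * C (q.coeff j) = 0 := by
  by_cases hj : j = q.natDegree
  · exact hj ▸ mul_C_leadingCoeff_eq_zero hR hq hf
  rw [← eraseLead_coeff_of_ne j hj]
  rcases q.eraseLead_natDegree_lt_or_eraseLead_eq_zero with hlt | h0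
  · exact mul_C_coeff_eq_zero hR (fun g hg => mul_eraseLead_eq_zero hR hq hg) hf j
  · rw [h0, coeff_zero, C_0, mul_zero]
termination_by q.natDegree

end Polynomial

end

/-- If `R` is quasi-Baer, then `Polynomial R` is quasi-Baer. -/
theorem polynomial_isQuasiBaer_of_isQuasiBaer (R : Type*) [Ring R]
    (hR : IsQuasiBaer R) : IsQuasiBaer (Polynomial R) := by
  refine isQuasiBaer_iff.mpr fun I => ?_
  let J := leftAnnihilatorOfSpan
    {x : R | ∃ q : R[X], (∀ f ∈ I, f * q = 0) ∧ ∃ j, q.coeff j = x}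
  obtain ⟨e, he, hJe, hfix⟩ := isQuasiBaer_iff.mp hR J
  have hcoeff (f : R[X]) (hf : f ∈ I) (i : ℕ) : f.coeff i ∈ J := by
    refine mem_leftAnnihilatorOfSpan.mpr ?_
    rintro _ ⟨q, hq, j, rfl⟩ r
    simpa using congrArg (coeff · i) (mul_C_coeff_eq_zero hR hq (I.mul_mem_right _ (C r) hf) j)
  refine ⟨C e, he.map C, fun f hf => ?_, fun q hq => ?_⟩
  · ext i
    rw [coeff_mul_C, coeff_zero, hJe _ (hcoeff f hf i)]
  · ext j
    rw [coeff_C_mul]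
    exact hfix _ fun a ha => by
      simpa using mem_leftAnnihilatorOfSpan.mp ha _ ⟨q, hq, j, rfl⟩ 1
end

section
/- Let R be a ring and n a natural number. If R is a quasi-Baer ring, then A_n is a quasi-Baer ring. -/
section Annihilator

variable {R : Type*} [Ring R]

theorem TwoSidedIdeal.forall_mem_span_mul_eq_zero_iff {S : Set R} {x : R} :
    (∀ a ∈ span S, a * x = 0) ↔ ∀ a ∈ S, ∀ s, a * s * x = 0 := by
  refine ⟨fun h a ha s => h _ (mul_mem_right _ _ _ (subset_span ha)), fun h a ha => ?_⟩
  suffices ∀ s, a * s * x = 0 by simpa using this 1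
  induction ha using span_induction with
  | mem a ha => exact h a ha
  | zero => simp
  | add a b _ _ ha hb => simp [add_mul, ha, hb]
  | neg a _ ha => simp [ha]
  | left_absorb b a _ ha => simp [mul_assoc, ha]
  | right_absorb b a _ ha => simpa [mul_assoc] using fun s => ha (b * s)

/-- `{x | ∀ a ∈ S, ∀ s, a * s * x = 0}` is the right annihilator of the ideal generated by `S`;
`e` is idempotent (take `s = 1`). -/
theorem IsQuasiBaer.exists_leftSemicentral (hR : IsQuasiBaer R) (S : Set R) :
    ∃ e : R, (∀ s, e * (s * e) = s * e) ∧ ∀ x, (∀ a ∈ S, ∀ s, a * s * x = 0) ↔ e * x = x := by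
  obtain ⟨e, he, hann⟩ := hR (TwoSidedIdeal.span S)
  have hS : ∀ x, (∀ a ∈ S, ∀ s, a * s * x = 0) ↔ e * x = x := fun x => by
    rw [← TwoSidedIdeal.forall_mem_span_mul_eq_zero_iff]
    exact Set.ext_iff.1 hann x
  refine ⟨e, fun s => (hS _).1 fun a ha t => ?_, hS⟩
  simpa [mul_assoc] using (hS e).2 he a ha (t * s)

theorem mul_mul_eq_zero_of_leftSemicentral {u v e : R} (he : ∀ s, e * (s * e) = s * e)
    (h₁ : ∀ s, u * e * s * v = 0) (h₂ : ∀ s, u * s * ((1 - e) * v) = 0) (s : R) :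
    u * s * v = 0 := by
  have hse : (1 - e) * (s * e) = 0 := by rw [sub_mul, one_mul, he, sub_self]
  calc u * s * v
      = u * e * s * v + u * ((1 - e) * (s * e)) * v + u * ((1 - e) * s) * ((1 - e) * v) := by
        noncomm_ring
    _ = 0 := by rw [h₁, h₂, hse, mul_zero, zero_mul, add_zero, add_zero]

end Annihilator

namespace AddMonoidAlgebra

variable {R M T : Type*} [Ring R]

section Support

variable [AddZeroClass M]

theorem support_coeff_mul_single_zero_subset (f : R[M]) (r : R) :
    (f * single 0 r).coeff.support ⊆ f.coeff.support := fun m hm => by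
  rw [Finsupp.mem_support_iff, coeff_mul_single_zero] at hm
  exact Finsupp.mem_support_iff.2 (left_ne_zero_of_mul hm)

theorem support_coeff_single_zero_mul_subset (f : R[M]) (r : R) :
    (single 0 r * f).coeff.support ⊆ f.coeff.support := fun m hm => by
  rw [Finsupp.mem_support_iff, coeff_single_zero_mul] at hm
  exact Finsupp.mem_support_iff.2 (right_ne_zero_of_mul hm)

theorem card_support_mul_single_zero_lt {f : R[M]} {a : M} {r : R} (ha : f.coeff a ≠ 0)
    (h : f.coeff a * r = 0) : (f * single 0 r).coeff.support.card < f.coeff.support.card := by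
  refine Finset.card_lt_card ((Finset.ssubset_iff_of_subset
    (support_coeff_mul_single_zero_subset f r)).2 ⟨a, ?_, ?_⟩)
  · simpa using ha
  · simpa [coeff_mul_single_zero] using h

theorem card_support_single_zero_mul_lt {f : R[M]} {a : M} {r : R} (ha : f.coeff a ≠ 0)
    (h : r * f.coeff a = 0) : (single 0 r * f).coeff.support.card < f.coeff.support.card := by
  refine Finset.card_lt_card ((Finset.ssubset_iff_of_subset
    (support_coeff_single_zero_mul_subset f r)).2 ⟨a, ?_, ?_⟩)
  · simpa using ha
  · simpa [coeff_single_zero_mul] using h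

end Support

variable [AddMonoid M] [LinearOrder T] [OrderBot T] [Add T] [AddLeftStrictMono T]
  [AddRightStrictMono T] {D : M → T}

theorem coeff_mul_mul_coeff_eq_zero_of_supDegree_le (hadd : ∀ a b, D (a + b) = D a + D b)
    (hD : D.Injective) {f g : R[M]} {a b : M} (hf : f.supDegree D ≤ D a)
    (hg : g.supDegree D ≤ D b) (h : ∀ p : R[M], f * p * g = 0) (s : R) :
    f.coeff a * s * g.coeff b = 0 := by
  have hfs : (f * single 0 s).supDegree D ≤ D a :=
    (Finset.sup_mono (support_coeff_mul_single_zero_subset f s)).trans hf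
  simpa [h, coeff_mul_single_zero] using (coeff_add_of_supDegree_le hadd hD hfs hg).symm

theorem coeff_mul_mul_coeff_eq_zero (hR : IsQuasiBaer R) (hadd : ∀ a b, D (a + b) = D a + D b)
    (hD : D.Injective) {f g : R[M]} (h : ∀ p : R[M], f * p * g = 0) (a b : M) (s : R) :
    f.coeff a * s * g.coeff b = 0 := by
  by_cases hf : f = 0
  · simp [hf]
  by_cases hg : g = 0
  · simp [hg]
  obtain ⟨τ, hτ, hfτ⟩ := exists_supDegree_mem_support D hf
  obtain ⟨ν, hν, hgν⟩ := exists_supDegree_mem_support D hg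
  obtain ⟨e, hsc, hS⟩ := hR.exists_leftSemicentral {f.coeff τ}
  have hτe : f.coeff τ * e = 0 := by
    simpa using (hS e).2 (by simpa using hsc 1) _ rfl 1
  have heν : e * g.coeff ν = g.coeff ν := (hS _).1 <| by
    simpa using coeff_mul_mul_coeff_eq_zero_of_supDegree_le hadd hD hfτ.le hgν.le h
  have hf' := card_support_mul_single_zero_lt (Finsupp.mem_support_iff.1 hτ) hτe
  have hg' := card_support_single_zero_mul_lt (r := 1 - e) (Finsupp.mem_support_iff.1 hν)
    (by rw [sub_mul, one_mul, heν, sub_self])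
  have h₁ (t : R) : f.coeff a * e * t * g.coeff b = 0 := by
    have := coeff_mul_mul_coeff_eq_zero hR hadd hD (f := f * single 0 e) (g := g)
      (fun p => by rw [mul_assoc f]; exact h _) a b t
    rwa [coeff_mul_single_zero] at this
  have h₂ (t : R) : f.coeff a * t * ((1 - e) * g.coeff b) = 0 := by
    have := coeff_mul_mul_coeff_eq_zero hR hadd hD (f := f) (g := single 0 (1 - e) * g)
      (fun p => by rw [← mul_assoc, mul_assoc f]; exact h _) a b t
    rwa [coeff_single_zero_mul] at this
  exact mul_mul_eq_zero_of_leftSemicentral hsc h₁ h₂ s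
termination_by f.coeff.support.card + g.coeff.support.card
decreasing_by all_goals omega

theorem isQuasiBaer (hR : IsQuasiBaer R) (hadd : ∀ a b, D (a + b) = D a + D b)
    (hD : D.Injective) : IsQuasiBaer R[M] := by
  intro J
  obtain ⟨e, hsc, hS⟩ := hR.exists_leftSemicentral {r | ∃ f ∈ J, ∃ m, f.coeff m = r}
  have he : e * e = e := by simpa using hsc 1
  have hJe {f : R[M]} (hf : f ∈ J) : f * single 0 e = 0 := by
    ext m
    simpa [coeff_mul_single_zero] using (hS e).2 he _ ⟨f, hf, m, rfl⟩ 1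
  refine ⟨single 0 e, by rw [single_mul_single, add_zero, he], Set.ext fun x => ⟨fun hx => ?_, ?_⟩⟩
  · ext m
    rw [coeff_single_zero_mul]
    refine (hS _).1 ?_
    rintro _ ⟨f, hf, μ, rfl⟩ s
    exact coeff_mul_mul_coeff_eq_zero hR hadd hD
      (fun p => hx _ (J.mul_mem_right _ _ hf)) μ m s
  · intro (hx : single 0 e * x = x) f hf
    rw [← hx, ← mul_assoc, hJe hf, zero_mul]

end AddMonoidAlgebra

/-- If `R` is quasi-Baer, then `A_n = AddMonoidAlgebra R (Fin n →₀ ℕ)`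
is quasi-Baer. -/
theorem addMonoidAlgebra_isQuasiBaer_of_isQuasiBaer (R : Type*) [Ring R] (n : ℕ)
    (hR : IsQuasiBaer R) : IsQuasiBaer (AddMonoidAlgebra R (Fin n →₀ ℕ)) :=
  AddMonoidAlgebra.isQuasiBaer hR (fun _ _ => rfl) toLex.injective
end

section
/- Let R be a skew-Armendariz ring. Then R is quasi-Baer if and only if the polynomial ring Polynomial R is quasi-Baer. -/
private lemma X_mul_eq_zero {R : Type*} [Ring R] {p : Polynomial R}
    (h : Polynomial.X * p = 0) : p = 0 := by
  ext n
  have := congrArg (fun q => Polynomial.coeff q (n + 1)) h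
  simpa [Polynomial.coeff_X_mul] using this

private lemma arm {R : Type*} [Ring R]
    (hSA : ∀ f g : Polynomial R, f * g = 0 → ∀ j : ℕ, f.coeff 0 * g.coeff j = 0) :
    ∀ (i : ℕ) (f g : Polynomial R), f * g = 0 → ∀ j : ℕ, f.coeff i * g.coeff j = 0 := by
  intro i
  induction i with
  | zero => exact fun f g h j => hSA f g h j
  | succ i ih =>
    intro f g h j
    have hC : Polynomial.C (f.coeff 0) * g = 0 := by
      ext n
      simpa [Polynomial.coeff_C_mul] using hSA f g h n
    have hX : Polynomial.X * (f.divX * g) = 0 := by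
      have := Polynomial.X_mul_divX_add (p := f)
      have : (Polynomial.X * f.divX + Polynomial.C (f.coeff 0)) * g = 0 := by
        rw [this]; exact h
      rw [add_mul, hC, add_zero, mul_assoc] at this
      exact this
    have hdiv : f.divX * g = 0 := X_mul_eq_zero hX
    have := ih f.divX g hdiv j
    rwa [Polynomial.coeff_divX] at this

/-- If `R` is skew-Armendariz, then `R` is quasi-Baer iff
`Polynomial R` is quasi-Baer. -/
theorem isQuasiBaer_iff_polynomial_of_skewArmendariz (R : Type*) [Ring R]
    (hSA : ∀ f g : Polynomial R, f * g = 0 → ∀ j : ℕ, f.coeff 0 * g.coeff j = 0) :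
    IsQuasiBaer R ↔ IsQuasiBaer (Polynomial R) := by
  constructor
  · -- R quasi-Baer → R[x] quasi-Baer
    intro hQB I
    -- the ideal of coefficients of members of I
    set Scar : Set R := {r : R | ∃ g ∈ I, ∃ i : ℕ, g.coeff i = r} with hScar
    have zero_mem : (0 : R) ∈ Scar := ⟨0, zero_mem I, 0, by simp⟩
    have add_mem : ∀ {x y : R}, x ∈ Scar → y ∈ Scar → x + y ∈ Scar := by
      rintro x y ⟨g, hg, i, rfl⟩ ⟨h, hh, j, rfl⟩
      refine ⟨Polynomial.X ^ j * g + Polynomial.X ^ i * h,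
        I.add_mem (I.mul_mem_left _ _ hg) (I.mul_mem_left _ _ hh), i + j, ?_⟩
      rw [Polynomial.coeff_add]
      congr 1
      · exact Polynomial.coeff_X_pow_mul g j i ▸ rfl
      · rw [show i + j = j + i from add_comm i j]
        exact Polynomial.coeff_X_pow_mul h i j ▸ rfl
    have neg_mem : ∀ {x : R}, x ∈ Scar → -x ∈ Scar := by
      rintro x ⟨g, hg, i, rfl⟩
      exact ⟨-g, neg_mem hg, i, by simp⟩
    have mull : ∀ {x y : R}, y ∈ Scar → x * y ∈ Scar := by
      rintro x y ⟨g, hg, i, rfl⟩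
      exact ⟨Polynomial.C x * g, I.mul_mem_left _ _ hg, i, by simp⟩
    have mulr : ∀ {x y : R}, x ∈ Scar → x * y ∈ Scar := by
      rintro x y ⟨g, hg, i, rfl⟩
      exact ⟨g * Polynomial.C y, I.mul_mem_right _ _ hg, i, by simp⟩
    obtain ⟨e, he, hset⟩ := hQB (TwoSidedIdeal.mk' Scar zero_mem add_mem neg_mem mull mulr)
    have hmem : ∀ a : R, a ∈ TwoSidedIdeal.mk' Scar zero_mem add_mem neg_mem mull mulr ↔
        a ∈ Scar := fun a => TwoSidedIdeal.mem_mk' _ _ _ _ _ _ a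
    have hset' : ∀ x : R, (∀ a ∈ Scar, a * x = 0) ↔ e * x = x := by
      intro x
      constructor
      · intro hx
        have : x ∈ {x : R | ∀ a ∈ TwoSidedIdeal.mk' Scar zero_mem add_mem neg_mem mull mulr,
            a * x = 0} := fun a ha => hx a ((hmem a).1 ha)
        rw [hset] at this; exact this
      · intro hx a ha
        have : x ∈ {x : R | e * x = x} := hx
        rw [← hset] at this
        exact this a ((hmem a).2 ha)
    -- e annihilates Scar on the right
    have heann : ∀ a ∈ Scar, a * e = 0 := fun a ha => ((hset' e).2 he) a ha
    refine ⟨Polynomial.C e, by rw [← Polynomial.C_mul, he], ?_⟩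
    ext f
    simp only [Set.mem_setOf_eq]
    constructor
    · intro hf
      ext n
      rw [Polynomial.coeff_C_mul]
      refine (hset' (f.coeff n)).1 ?_
      rintro a ⟨g, hg, i, rfl⟩
      exact arm hSA i g f (hf g hg) n
    · intro hf g hg
      ext n
      rw [Polynomial.coeff_mul, Polynomial.coeff_zero]
      refine Finset.sum_eq_zero ?_
      rintro ⟨i, j⟩ _
      have hfj : e * f.coeff j = f.coeff j := by
        have := congrArg (fun q => Polynomial.coeff q j) hf
        simpa [Polynomial.coeff_C_mul] using this
      have hgi : g.coeff i ∈ Scar := ⟨g, hg, i, rfl⟩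
      calc g.coeff i * f.coeff j = g.coeff i * (e * f.coeff j) := by rw [hfj]
        _ = (g.coeff i * e) * f.coeff j := by rw [mul_assoc]
        _ = 0 := by rw [heann _ hgi, zero_mul]
  · -- R[x] quasi-Baer → R quasi-Baer
    intro hQB I
    set Jcar : Set (Polynomial R) := {f : Polynomial R | ∀ n : ℕ, f.coeff n ∈ I} with hJcar
    have zero_mem : (0 : Polynomial R) ∈ Jcar := fun n => by simpa using I.zero_mem
    have add_mem : ∀ {x y : Polynomial R}, x ∈ Jcar → y ∈ Jcar → x + y ∈ Jcar := by
      intro x y hx hy n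
      rw [Polynomial.coeff_add]; exact I.add_mem (hx n) (hy n)
    have neg_mem : ∀ {x : Polynomial R}, x ∈ Jcar → -x ∈ Jcar := by
      intro x hx n
      rw [Polynomial.coeff_neg]; exact neg_mem (hx n)
    have mull : ∀ {x y : Polynomial R}, y ∈ Jcar → x * y ∈ Jcar := by
      intro x y hy n
      rw [Polynomial.coeff_mul]
      exact sum_mem (fun c _ => I.mul_mem_left _ _ (hy c.2))
    have mulr : ∀ {x y : Polynomial R}, x ∈ Jcar → x * y ∈ Jcar := by
      intro x y hx n
      rw [Polynomial.coeff_mul]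
      exact sum_mem (fun c _ => I.mul_mem_right _ _ (hx c.1))
    obtain ⟨e, he, hset⟩ := hQB (TwoSidedIdeal.mk' Jcar zero_mem add_mem neg_mem mull mulr)
    have hmem : ∀ f : Polynomial R,
        f ∈ TwoSidedIdeal.mk' Jcar zero_mem add_mem neg_mem mull mulr ↔ f ∈ Jcar :=
      fun f => TwoSidedIdeal.mem_mk' _ _ _ _ _ _ f
    have hset' : ∀ x : Polynomial R, (∀ f ∈ Jcar, f * x = 0) ↔ e * x = x := by
      intro x
      constructor
      · intro hx
        have : x ∈ {x : Polynomial R | ∀ a ∈ TwoSidedIdeal.mk' Jcar zero_mem add_mem neg_mem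
            mull mulr, a * x = 0} := fun a ha => hx a ((hmem a).1 ha)
        rw [hset] at this; exact this
      · intro hx a ha
        have : x ∈ {x : Polynomial R | e * x = x} := hx
        rw [← hset] at this
        exact this a ((hmem a).2 ha)
    have heann : ∀ f ∈ Jcar, f * e = 0 := fun f hf => ((hset' e).2 he) f hf
    refine ⟨e.coeff 0, ?_, ?_⟩
    · have := congrArg (fun q => Polynomial.coeff q 0) he
      simpa [Polynomial.mul_coeff_zero] using this
    ext r
    simp only [Set.mem_setOf_eq]
    constructor
    · intro hr
      have hCr : ∀ f ∈ Jcar, f * Polynomial.C r = 0 := by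
        intro f hf
        ext n
        rw [Polynomial.coeff_mul_C, Polynomial.coeff_zero]
        exact hr _ (hf n)
      have := (hset' (Polynomial.C r)).1 hCr
      have := congrArg (fun q => Polynomial.coeff q 0) this
      simpa using this
    · intro hr a ha
      have hCa : (Polynomial.C a : Polynomial R) ∈ Jcar := by
        intro n
        by_cases hn : n = 0
        · simpa [hn] using ha
        · simp [Polynomial.coeff_C, hn]
      have hae : Polynomial.C a * e = 0 := heann _ hCa
      have hae0 : a * e.coeff 0 = 0 := by
        have := congrArg (fun q => Polynomial.coeff q 0) hae
        simpa [Polynomial.mul_coeff_zero] using this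
      calc a * r = a * (e.coeff 0 * r) := by rw [hr]
        _ = (a * e.coeff 0) * r := by rw [mul_assoc]
        _ = 0 := by rw [hae0, zero_mul]
end

section
/- Let R be a skew-Armendariz ring. Then R is a Baer ring if and only if the polynomial ring Polynomial R is a Baer ring. -/
/-- A ring `T` is Baer if the right annihilator of every subset of `T` equals `eT`
for some idempotent `e ∈ T`. -/
def IsBaerRing (T : Type*) [Ring T] : Prop :=
  ∀ S : Set T, ∃ e : T, e * e = e ∧
    {x : T | ∀ s ∈ S, s * x = 0} = {x : T | e * x = x}

/-- A skew-Armendariz condition on constant coefficients bootstraps to all coefficients. -/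
theorem skewArmendariz_all_coeffs {R : Type*} [Ring R]
    (hSA : ∀ f g : Polynomial R, f * g = 0 → ∀ j : ℕ, f.coeff 0 * g.coeff j = 0) :
    ∀ i : ℕ, ∀ f g : Polynomial R, f * g = 0 → ∀ j : ℕ, f.coeff i * g.coeff j = 0 := by
  intro i
  induction i with
  | zero => exact fun f g h j => hSA f g h j
  | succ i ih =>
    intro f g h j
    have h0 : Polynomial.C (f.coeff 0) * g = 0 := by
      ext n
      simp [Polynomial.coeff_C_mul, hSA f g h n]
    have h1 : f.divX * g = 0 := by
      have hx : f.divX * Polynomial.X * g = 0 := by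
        have hsum : (f.divX * Polynomial.X + Polynomial.C (f.coeff 0)) * g = 0 := by
          rw [Polynomial.divX_mul_X_add, h]
        rw [add_mul, h0, add_zero] at hsum
        exact hsum
      have hx' : Polynomial.X * (f.divX * g) = 0 := by
        rw [← mul_assoc, Polynomial.X_mul]
        exact hx
      ext n
      have := congrArg (fun p => Polynomial.coeff p (n + 1)) hx'
      simpa [Polynomial.coeff_X_mul] using this
    have := ih f.divX g h1 j
    simpa [Polynomial.coeff_divX] using this

/-- If `R` is skew-Armendariz, then `R` is a Baer ring iff
`Polynomial R` is a Baer ring. -/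
theorem isBaer_iff_polynomial_of_skewArmendariz (R : Type*) [Ring R]
    (hSA : ∀ f g : Polynomial R, f * g = 0 → ∀ j : ℕ, f.coeff 0 * g.coeff j = 0) :
    IsBaerRing R ↔ IsBaerRing (Polynomial R) := by
  have arm := skewArmendariz_all_coeffs hSA
  constructor
  · -- R Baer → R[x] Baer
    intro hB S
    obtain ⟨e, he, hr⟩ := hB {r : R | ∃ f ∈ S, ∃ i : ℕ, f.coeff i = r}
    refine ⟨Polynomial.C e, by rw [← Polynomial.C_mul, he], ?_⟩
    ext g
    simp only [Set.mem_setOf_eq]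
    constructor
    · intro hg
      ext n
      rw [Polynomial.coeff_C_mul]
      have hmem : g.coeff n ∈ {x : R | ∀ s ∈ {r : R | ∃ f ∈ S, ∃ i : ℕ, f.coeff i = r},
          s * x = 0} := by
        intro s hs
        obtain ⟨f, hf, i, rfl⟩ := hs
        exact arm i f g (hg f hf) n
      rw [hr] at hmem
      exact hmem
    · intro hg f hf
      have hfe : f * Polynomial.C e = 0 := by
        ext n
        rw [Polynomial.coeff_mul_C]
        have hemem : e ∈ {x : R | e * x = x} := he
        rw [← hr] at hemem
        simpa using hemem (f.coeff n) ⟨f, hf, n, rfl⟩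
      calc f * g = f * (Polynomial.C e * g) := by rw [hg]
        _ = f * Polynomial.C e * g := (mul_assoc _ _ _).symm
        _ = 0 := by rw [hfe, zero_mul]
  · -- R[x] Baer → R Baer
    intro hB S
    obtain ⟨E, hE, hr⟩ := hB (Polynomial.C '' S)
    refine ⟨E.coeff 0, ?_, ?_⟩
    · have := congrArg (fun p => Polynomial.coeff p 0) hE
      simpa [Polynomial.mul_coeff_zero] using this
    · ext x
      simp only [Set.mem_setOf_eq]
      constructor
      · intro hx
        have hmem : Polynomial.C x ∈
            {g : Polynomial R | ∀ s ∈ Polynomial.C '' S, s * g = 0} := by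
          intro s hs
          obtain ⟨r, hrS, rfl⟩ := hs
          rw [← Polynomial.C_mul, hx r hrS, Polynomial.C_0]
        rw [hr] at hmem
        have := congrArg (fun p => Polynomial.coeff p 0) hmem
        simpa [Polynomial.mul_coeff_zero] using this
      · intro hx s hs
        have hE' : E ∈ {g : Polynomial R | E * g = g} := hE
        rw [← hr] at hE'
        have hsE : Polynomial.C s * E = 0 := hE' (Polynomial.C s) ⟨s, hs, rfl⟩
        have h0 : s * E.coeff 0 = 0 := by
          have := congrArg (fun p => Polynomial.coeff p 0) hsE
          simpa [Polynomial.mul_coeff_zero] using this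
        calc s * x = s * (E.coeff 0 * x) := by rw [hx]
          _ = s * E.coeff 0 * x := (mul_assoc _ _ _).symm
          _ = 0 := by rw [h0, zero_mul]
end

section
/- Let R be a ring, n a natural number, and suppose R is n-skew-Armendariz. Then R is a Baer ring if and only if A_n is a Baer ring. -/
open AddMonoidAlgebra

lemma isBaerRing_iff {T : Type*} [Ring T] : IsBaerRing T ↔
    ∀ S : Set T, ∃ e : T, e * e = e ∧ ∀ x, (∀ s ∈ S, s * x = 0) ↔ e * x = x := by
  simp only [IsBaerRing, Set.ext_iff, Set.mem_ofPred_eq]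

/-- For `M = Fin n →₀ ℕ` this is the paper's `n`-skew-Armendariz condition, with trivial
endomorphisms and derivations. -/
def IsSkewArmendariz (R M : Type*) [Ring R] [AddMonoid M] : Prop :=
  ∀ f g : R[M], f * g = 0 → ∀ m, f.coeff 0 * g.coeff m = 0

def IsArmendariz (R M : Type*) [Ring R] [AddMonoid M] : Prop :=
  ∀ f g : R[M], f * g = 0 → ∀ a b, f.coeff a * g.coeff b = 0

section

variable {R M N : Type*} [Ring R] [AddMonoid M] [AddMonoid N]

open Polynomial in
lemma Polynomial.coeff_mul_coeff_eq_zero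
    (hR : ∀ p q : Polynomial R, p * q = 0 → ∀ j, p.coeff 0 * q.coeff j = 0)
    {p q : Polynomial R} (hpq : p * q = 0) (i j : ℕ) : p.coeff i * q.coeff j = 0 := by
  induction i generalizing p with
  | zero => exact hR p q hpq j
  | succ i ih =>
    have hC : C (p.coeff 0) * q = 0 := by
      ext k
      simp [coeff_C_mul, hR p q hpq k]
    have hdivX : p.divX * q = 0 := by
      refine isRegular_X.left ?_
      calc X * (p.divX * q) = (X * p.divX + C (p.coeff 0)) * q - C (p.coeff 0) * q := by
            rw [add_mul, add_sub_cancel_right, mul_assoc]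
        _ = X * 0 := by rw [X_mul_divX_add, hpq, hC, sub_zero, mul_zero]
    simpa [coeff_divX] using ih hdivX

lemma IsSkewArmendariz.of_injective (φ : M →+ N) (hφ : Function.Injective φ)
    (h : IsSkewArmendariz R N) : IsSkewArmendariz R M := by
  intro f g hfg m
  have hcoeff (x : R[M]) (a : M) : (mapDomainRingHom R φ x).coeff (φ a) = x.coeff a := by
    simp [mapDomain, Finsupp.mapDomain_apply hφ]
  have := h (mapDomainRingHom R φ f) (mapDomainRingHom R φ g)
    (by rw [← map_mul, hfg, map_zero]) (φ m)
  rwa [← φ.map_zero, hcoeff, hcoeff] at this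

lemma IsArmendariz.of_injOn (hφ : ∀ D : Finset M, ∃ φ : M →+ N, Set.InjOn φ D)
    (h : IsArmendariz R N) : IsArmendariz R M := by
  classical
  intro f g hfg a b
  set D := insert a (insert b (f.coeff.support ∪ g.coeff.support))
  obtain ⟨φ, hφD⟩ := hφ D
  have hcoeff (x : R[M]) (hx : x.coeff.support ⊆ D) (c : M) (hc : c ∈ D) :
      (mapDomainRingHom R φ x).coeff (φ c) = x.coeff c := by
    simpa [mapDomain] using
      Finsupp.mapDomain_apply' (D : Set M) x.coeff (by exact_mod_cast hx) hφD hc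
  have := h (mapDomainRingHom R φ f) (mapDomainRingHom R φ g)
    (by rw [← map_mul, hfg, map_zero]) (φ a) (φ b)
  rwa [hcoeff f (by intro; simp +contextual [D]) a (by simp [D]),
    hcoeff g (by intro; simp +contextual [D]) b (by simp [D])] at this

lemma IsSkewArmendariz.isArmendariz_of_subsingleton [Subsingleton M]
    (h : IsSkewArmendariz R M) : IsArmendariz R M := by
  intro f g hfg a b
  rw [Subsingleton.elim a 0]
  exact h f g hfg b

lemma IsSkewArmendariz.isArmendariz_nat (h : IsSkewArmendariz R ℕ) : IsArmendariz R ℕ := by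
  intro f g hfg a b
  have hR : ∀ p q : Polynomial R, p * q = 0 → ∀ j, p.coeff 0 * q.coeff j = 0 :=
    fun p q hpq j ↦ by
      simpa [Polynomial.toFinsupp_apply] using
        h p.toFinsupp q.toFinsupp (by rw [← Polynomial.toFinsupp_mul, hpq]; rfl) j
  simpa using Polynomial.coeff_mul_coeff_eq_zero hR
    (p := ⟨f⟩) (q := ⟨g⟩) (by rw [← Polynomial.ofFinsupp_mul, hfg]; rfl) a b

open Nat List in
theorem Nat.injOn_sum_mul_pow {b : ℕ} (hb : 1 < b) (n : ℕ) :
    Set.InjOn (fun v : Fin n → ℕ ↦ ∑ i, v i * b ^ (i : ℕ)) {v | ∀ i, v i < b} := by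
  intro v hv w hw h
  refine ofFn_inj.mp <| ofDigits_inj_of_len_eq hb (by simp) (by simpa using hv)
    (by simpa using hw) ?_
  simpa only [ofDigits_eq_sum_mapIdx, mapIdx_eq_ofFn, get_ofFn, length_ofFn,
    Fin.val_cast, sum_ofFn, Fin.cast_cast, Fin.cast_eq_self] using h

theorem Finsupp.exists_addMonoidHom_injOn {n : ℕ} (D : Finset (Fin n →₀ ℕ)) :
    ∃ φ : (Fin n →₀ ℕ) →+ ℕ, Set.InjOn φ D := by
  set b := D.sup Finsupp.degree + 2
  have hlt : ∀ m ∈ D, ∀ i, m i < b := fun m hm i ↦ by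
    have := (Finsupp.le_degree i m).trans (Finset.le_sup hm)
    omega
  refine ⟨Finsupp.weight fun i : Fin n ↦ b ^ (i : ℕ), fun u hu v hv h ↦ ?_⟩
  refine DFunLike.coe_injective <| Nat.injOn_sum_mul_pow (by omega) n (hlt u hu) (hlt v hv) ?_
  simpa [Finsupp.weight_apply, Finsupp.sum_fintype] using h

lemma IsSkewArmendariz.isArmendariz_finsupp {n : ℕ} (h : IsSkewArmendariz R (Fin n →₀ ℕ)) :
    IsArmendariz R (Fin n →₀ ℕ) := by
  rcases n with _ | n
  · exact h.isArmendariz_of_subsingleton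
  · have hℕ : IsSkewArmendariz R ℕ :=
      h.of_injective (Finsupp.singleAddHom 0) (Finsupp.single_injective 0)
    exact hℕ.isArmendariz_nat.of_injOn Finsupp.exists_addMonoidHom_injOn

lemma IsBaerRing.addMonoidAlgebra (hA : IsArmendariz R M) (hR : IsBaerRing R) :
    IsBaerRing R[M] := by
  rw [isBaerRing_iff] at hR ⊢
  intro S
  obtain ⟨e, he, hann⟩ := hR {f.coeff m | (f ∈ S) (m : M)}
  have hann' (x : R) : (∀ f ∈ S, ∀ m, f.coeff m * x = 0) ↔ e * x = x := by
    rw [← hann]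
    exact ⟨fun h _ ⟨f, hf, m, hm⟩ ↦ hm ▸ h f hf m,
      fun h f hf m ↦ h _ ⟨f, hf, m, rfl⟩⟩
  have hSe : ∀ f ∈ S, f * single 0 e = 0 := fun f hf ↦ by
    ext m
    simpa [coeff_mul_single_zero] using (hann' e).2 he f hf m
  refine ⟨single 0 e, by rw [single_mul_single, zero_add, he],
    fun g ↦ ⟨fun hg ↦ ?_, fun hg f hf ↦ ?_⟩⟩
  · ext m
    rw [coeff_single_zero_mul]
    exact (hann' _).1 fun f hf a ↦ hA f g (hg f hf) a m
  · rw [← hg, ← mul_assoc, hSe f hf, zero_mul]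

lemma IsBaerRing.of_addMonoidAlgebra (h : IsBaerRing R[M]) : IsBaerRing R := by
  rw [isBaerRing_iff] at h ⊢
  intro S
  obtain ⟨E, hE, hann⟩ := h (single 0 '' S)
  simp only [Set.forall_mem_image] at hann
  have hSE : ∀ s ∈ S, s * E.coeff 0 = 0 := fun s hs ↦ by
    simpa [coeff_single_zero_mul] using
      congr_arg (fun x : R[M] ↦ x.coeff 0) ((hann E).2 hE hs)
  have hann' (r : R) : (∀ s ∈ S, s * r = 0) ↔ E.coeff 0 * r = r := by
    refine ⟨fun hr ↦ ?_, fun hr s hs ↦ by rw [← hr, ← mul_assoc, hSE s hs, zero_mul]⟩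
    have := (hann (single 0 r)).1 fun s hs ↦ by
      rw [single_mul_single, zero_add, hr s hs, single_zero]
    simpa [coeff_mul_single_zero] using congr_arg (fun x : R[M] ↦ x.coeff 0) this
  exact ⟨E.coeff 0, (hann' _).1 hSE, hann'⟩

end

/-- If `R` is `n`-skew-Armendariz, then `R` is a Baer ring iff
`A_n = AddMonoidAlgebra R (Fin n →₀ ℕ)` is a Baer ring. -/
theorem isBaer_iff_addMonoidAlgebra_of_nSkewArmendariz (R : Type*) [Ring R] (n : ℕ)
    (hSA : ∀ f g : AddMonoidAlgebra R (Fin n →₀ ℕ), f * g = 0 →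
      ∀ m : Fin n →₀ ℕ, f.coeff 0 * g.coeff m = 0) :
    IsBaerRing R ↔ IsBaerRing (AddMonoidAlgebra R (Fin n →₀ ℕ)) :=
  ⟨IsBaerRing.addMonoidAlgebra (IsSkewArmendariz.isArmendariz_finsupp hSA),
    IsBaerRing.of_addMonoidAlgebra⟩
end

section
/- Let R be a skew-Armendariz ring. Then R is a right p.p.-ring if and only if the polynomial ring Polynomial R is a right p.p.-ring. -/
/-- A ring `T` is right p.p. if the right annihilator of every element of `T`
equals `eT` for some idempotent `e ∈ T`. -/
def IsRightPP (T : Type*) [Ring T] : Prop :=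
  ∀ a : T, ∃ e : T, e * e = e ∧
    {x : T | a * x = 0} = {x : T | e * x = x}

open Polynomial

section Aux
variable {R : Type*} [Ring R]

private lemma lin_mul (a b c d : R) :
    (C a + C b * X) * (C c + C d * X)
      = C (a*c) + C (a*d + b*c) * X + C (b*d) * (X*X) := by
  have hXC : ∀ (r : R) (p : R[X]), X * (C r * p) = C r * (X * p) := by
    intro r p; rw [← mul_assoc, X_mul_C, mul_assoc]
  have hCC : ∀ (r s : R) (p : R[X]), C r * (C s * p) = C (r*s) * p := by
    intro r s p; rw [← mul_assoc, ← C_mul]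
  simp only [mul_add, add_mul, mul_assoc, X_mul_C, hXC, hCC, ← C_mul, C_add, add_mul]
  abel

/-- skew-Armendariz implies idempotents are central. -/
private lemma abelian
    (hSA : ∀ f g : Polynomial R, f * g = 0 → ∀ j : ℕ, f.coeff 0 * g.coeff j = 0)
    {e : R} (he : e * e = e) (r : R) : e * r = r * e := by
  have heu : e * (1 - e) = 0 := by rw [mul_one_sub, he, sub_self]
  have hue : (1 - e) * e = 0 := by rw [one_sub_mul, he, sub_self]
  have huu : (1 - e) * (1 - e) = 1 - e := by rw [mul_one_sub, hue, sub_zero]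
  -- step 1 : e*(r*(1-e)) = 0
  have step1 : e * (r * (1 - e)) = 0 := by
    set b := e * (r * (1 - e)) with hb
    have hbe : e * b = b := by rw [hb, ← mul_assoc, he]
    have hb1 : b * (1 - e) = b := by
      rw [hb, mul_assoc, mul_assoc, huu]
    have h1b : (1 - e) * b = 0 := by rw [hb, ← mul_assoc, hue, zero_mul]
    have hbb : b * b = 0 := by
      rw [hb, mul_assoc, mul_assoc]
      rw [show (1 - e) * (e * (r * (1 - e))) = 0 from h1b]
      rw [mul_zero, mul_zero]
    have hprod : (C e + C b * X) * (C (1 - e) + C (-b) * X) = 0 := by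
      rw [lin_mul, heu, mul_neg, hbe, hb1, neg_add_cancel, mul_neg, hbb, neg_zero]
      simp
    have h := hSA _ _ hprod 1
    simp only [coeff_add, coeff_C, coeff_C_mul, coeff_X_one, coeff_X_zero] at h
    simp only [mul_zero, add_zero, mul_one, if_pos rfl, one_ne_zero, if_neg, reduceIte] at h
    -- h : e * (0 + -b) = 0  roughly
    have hb0 : e * (-b) = 0 := by simpa using h
    have : e * b = 0 := by
      have := congrArg Neg.neg hb0; simpa using this
    rw [hbe] at this; exact this
  -- step 2 : (1-e)*(r*e) = 0
  have step2 : (1 - e) * (r * e) = 0 := by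
    set b := (1 - e) * (r * e) with hb
    have hub : (1 - e) * b = b := by rw [hb, ← mul_assoc, huu]
    have hbe : b * e = b := by rw [hb, mul_assoc, mul_assoc, he]
    have heb : e * b = 0 := by rw [hb, ← mul_assoc, heu, zero_mul]
    have hbb : b * b = 0 := by
      rw [hb, mul_assoc, mul_assoc]
      rw [show e * ((1 - e) * (r * e)) = 0 from heb]
      rw [mul_zero, mul_zero]
    have hprod : (C (1 - e) + C (-b) * X) * (C e + C b * X) = 0 := by
      rw [lin_mul, hue, hub, neg_mul, hbe, add_neg_cancel, neg_mul, hbb, neg_zero]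
      simp
    have h := hSA _ _ hprod 1
    simp only [coeff_add, coeff_C, coeff_C_mul, coeff_X_one, coeff_X_zero] at h
    simp only [mul_zero, add_zero, mul_one, if_pos rfl, one_ne_zero, if_neg, reduceIte] at h
    have hb0 : (1 - e) * b = 0 := by simpa using h
    rw [hub] at hb0; exact hb0
  have h1 : e * r = e * (r * e) := by
    have : e * r - e * (r * e) = 0 := by
      rw [← mul_sub, ← mul_one_sub, step1]
    exact sub_eq_zero.mp this
  have h2 : r * e = e * (r * e) := by
    have : r * e - e * (r * e) = 0 := by
      rw [← one_sub_mul, step2]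
    exact sub_eq_zero.mp this
  exact h1.trans h2.symm

end Aux

section Aux2
variable {R : Type*} [Ring R]

private lemma mul_X_eq_zero' {p : R[X]} (h : p * X = 0) : p = 0 := by
  ext n
  have := congrArg (fun q => Polynomial.coeff q (n+1)) h
  simpa [Polynomial.coeff_mul_X] using this

/-- For a skew-Armendariz ring, `f * g = 0` kills all cross products of coefficients. -/
private lemma allCoeff
    (hSA : ∀ f g : Polynomial R, f * g = 0 → ∀ j : ℕ, f.coeff 0 * g.coeff j = 0) :
    ∀ (i : ℕ) (f g : Polynomial R), f * g = 0 → ∀ j : ℕ, f.coeff i * g.coeff j = 0 := by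
  intro i
  induction i with
  | zero => exact hSA
  | succ i ih =>
    intro f g h j
    have h0 : (C (f.coeff 0)) * g = 0 := by
      ext n
      simp only [coeff_C_mul, coeff_zero]
      exact hSA f g h n
    have hdiv : f.divX * X * g = 0 := by
      have : f.divX * X = f - C (f.coeff 0) :=
        eq_sub_of_add_eq (Polynomial.divX_mul_X_add f)
      rw [this, sub_mul, h, h0, sub_zero]
    have hdg : f.divX * g = 0 := by
      apply mul_X_eq_zero'
      rw [mul_assoc] at hdiv
      rw [X_mul] at hdiv
      rw [← mul_assoc] at hdiv
      exact hdiv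
    have := ih f.divX g hdg j
    rwa [Polynomial.coeff_divX] at this

/-- Finite intersections of right annihilators in an abelian right p.p. ring. -/
private lemma interAnn (hpp : IsRightPP R)
    (hab : ∀ e r : R, e * e = e → e * r = r * e) (a : ℕ → R) :
    ∀ n : ℕ, ∃ e : R, e * e = e ∧ ∀ x : R, (∀ i ≤ n, a i * x = 0) ↔ e * x = x := by
  intro n
  induction n with
  | zero =>
    obtain ⟨e, he, hs⟩ := hpp (a 0)
    refine ⟨e, he, fun x => ?_⟩
    have := Set.ext_iff.mp hs x
    simp only [Set.mem_setOf_eq] at this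
    constructor
    · intro h; exact this.mp (h 0 le_rfl)
    · intro h i hi
      interval_cases i
      exact this.mpr h
  | succ n ih =>
    obtain ⟨e₀, he₀, hs₀⟩ := ih
    obtain ⟨e₁, he₁, hs₁⟩ := hpp (a (n+1))
    have hcomm : e₀ * e₁ = e₁ * e₀ := hab e₀ e₁ he₀
    have hs₁' : ∀ x : R, a (n+1) * x = 0 ↔ e₁ * x = x := by
      intro x
      have := Set.ext_iff.mp hs₁ x
      simpa only [Set.mem_setOf_eq] using this
    refine ⟨e₀ * e₁, ?_, fun x => ?_⟩
    · calc e₀ * e₁ * (e₀ * e₁) = e₀ * (e₁ * e₀) * e₁ := by rw [mul_assoc, mul_assoc, mul_assoc]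
        _ = e₀ * (e₀ * e₁) * e₁ := by rw [← hcomm]
        _ = (e₀ * e₀) * (e₁ * e₁) := by rw [mul_assoc, mul_assoc, mul_assoc]
        _ = e₀ * e₁ := by rw [he₀, he₁]
    · constructor
      · intro h
        have h₀ : e₀ * x = x := (hs₀ x).mp (fun i hi => h i (hi.trans (Nat.le_succ n)))
        have h₁ : e₁ * x = x := (hs₁' x).mp (h (n+1) le_rfl)
        rw [mul_assoc, h₁, h₀]
      · intro h
        have h₀ : e₀ * x = x := by
          calc e₀ * x = e₀ * (e₀ * e₁ * x) := by rw [h]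
            _ = (e₀ * e₀) * e₁ * x := by simp only [mul_assoc]
            _ = e₀ * e₁ * x := by rw [he₀]
            _ = x := h
        have h₁ : e₁ * x = x := by
          calc e₁ * x = e₁ * (e₀ * e₁ * x) := by rw [h]
            _ = (e₁ * e₀) * (e₁ * x) := by simp only [mul_assoc]
            _ = (e₀ * e₁) * (e₁ * x) := by rw [← hcomm]
            _ = e₀ * (e₁ * e₁) * x := by simp only [mul_assoc]
            _ = e₀ * e₁ * x := by rw [he₁]
            _ = x := h
        intro i hi
        rcases eq_or_lt_of_le hi with h' | h'
        · rw [h']; exact (hs₁' x).mpr h₁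
        · exact (hs₀ x).mpr h₀ i (Nat.lt_succ_iff.mp h')

end Aux2

/-- If `R` is skew-Armendariz, then `R` is a right p.p.-ring iff
`Polynomial R` is a right p.p.-ring. -/
theorem isRightPP_iff_polynomial_of_skewArmendariz (R : Type*) [Ring R]
    (hSA : ∀ f g : Polynomial R, f * g = 0 → ∀ j : ℕ, f.coeff 0 * g.coeff j = 0) :
    IsRightPP R ↔ IsRightPP (Polynomial R) := by
  constructor
  · intro hpp f
    obtain ⟨e, he, hiff⟩ :=
      interAnn hpp (fun e r he => abelian hSA he r) f.coeff f.natDegree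
    refine ⟨C e, by rw [← C_mul, he], ?_⟩
    ext g
    simp only [Set.mem_setOf_eq]
    constructor
    · intro hfg
      ext n
      rw [coeff_C_mul]
      exact (hiff (g.coeff n)).mp (fun i _ => allCoeff hSA i f g hfg n)
    · intro hg
      have hco : ∀ n, e * g.coeff n = g.coeff n := by
        intro n
        have := congrArg (fun q => Polynomial.coeff q n) hg
        simpa [coeff_C_mul] using this
      have hall : ∀ i n, f.coeff i * g.coeff n = 0 := by
        intro i n
        rcases le_or_gt i f.natDegree with hi | hi
        · exact (hiff (g.coeff n)).mpr (hco n) i hi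
        · rw [coeff_eq_zero_of_natDegree_lt hi, zero_mul]
      ext n
      rw [coeff_mul, coeff_zero]
      exact Finset.sum_eq_zero (fun p _ => hall p.1 p.2)
  · intro hpp a
    obtain ⟨E, hE, hs⟩ := hpp (C a)
    have hsE : ∀ g : R[X], C a * g = 0 ↔ E * g = g := by
      intro g
      have := Set.ext_iff.mp hs g
      simpa only [Set.mem_setOf_eq] using this
    have hCaE : C a * E = 0 := (hsE E).mpr hE
    have haE : ∀ j, a * E.coeff j = 0 := by
      intro j
      have := congrArg (fun q => Polynomial.coeff q j) hCaE
      simpa [coeff_C_mul] using this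
    have hE1 : (E - 1) * E = 0 := by rw [sub_mul, one_mul, hE, sub_self]
    have he : (E.coeff 0 - 1) * E.coeff 0 = 0 := by
      have := hSA (E - 1) E hE1 0
      simpa [coeff_sub, coeff_one] using this
    have hee : E.coeff 0 * E.coeff 0 = E.coeff 0 := by
      have h' : E.coeff 0 * E.coeff 0 - E.coeff 0 = 0 := by
        rw [sub_mul, one_mul] at he; exact he
      exact sub_eq_zero.mp h'
    refine ⟨E.coeff 0, hee, ?_⟩
    ext x
    simp only [Set.mem_setOf_eq]
    constructor
    · intro hax
      have hc : C a * C x = 0 := by rw [← C_mul, hax, C_0]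
      have hEx : E * C x = C x := (hsE _).mp hc
      have := congrArg (fun q => Polynomial.coeff q 0) hEx
      simpa [Polynomial.mul_coeff_zero, coeff_C] using this
    · intro hex
      calc a * x = a * (E.coeff 0 * x) := by rw [hex]
        _ = (a * E.coeff 0) * x := by rw [mul_assoc]
        _ = 0 := by rw [haE 0, zero_mul]
end

section
/- Let R be an Abelian ring. For an idempotent c ∈ R, say that the corner cR is skew-Armendariz if for all f, g ∈ Polynomial R such that c * f.coeff i = f.coeff i and c * g.coeff i = g.coeff i for all i, f * g = 0 implies f.coeff 0 * g.coeff j = 0 for all j. Then the following are equivalent: (i) R is skew-Armendariz; (ii) for every idempotent e ∈ R, both eR and (1−e)R are skew-Armendariz; (iii) there exists an idempotent e ∈ R such that both eR and (1−e)R are skew-Armendariz. -/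
/-- A ring `R` is skew-Armendariz if for all `f, g : Polynomial R` with `f * g = 0`,
one has `f.coeff 0 * g.coeff j = 0` for all `j`. -/
def SkewArmendariz (R : Type*) [Ring R] : Prop :=
  ∀ f g : Polynomial R, f * g = 0 → ∀ j : ℕ, f.coeff 0 * g.coeff j = 0

/-- For an idempotent `c` of `R`, the corner `cR` is skew-Armendariz if for all
`f, g : Polynomial R` all of whose coefficients lie in `cR` (i.e. are fixed by left
multiplication by `c`), `f * g = 0` implies `f.coeff 0 * g.coeff j = 0` for all `j`. -/
def CornerSkewArmendariz (R : Type*) [Ring R] (c : R) : Prop :=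
  ∀ f g : Polynomial R,
    (∀ i : ℕ, c * f.coeff i = f.coeff i) →
    (∀ i : ℕ, c * g.coeff i = g.coeff i) →
    f * g = 0 → ∀ j : ℕ, f.coeff 0 * g.coeff j = 0

lemma corner_aux {R : Type*} [Ring R] (c : R) (hc : c * c = c)
    (hcomm : ∀ r : R, c * r = r * c) (h : CornerSkewArmendariz R c)
    (f g : Polynomial R) (hfg : f * g = 0) (j : ℕ) :
    c * (f.coeff 0 * g.coeff j) = 0 := by
  have hcf : Polynomial.C c * f = f * Polynomial.C c := by
    ext i
    simp [Polynomial.coeff_C_mul, Polynomial.coeff_mul_C, hcomm]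
  have key := h (Polynomial.C c * f) (Polynomial.C c * g)
    (fun i => by simp [Polynomial.coeff_C_mul, ← mul_assoc, hc])
    (fun i => by simp [Polynomial.coeff_C_mul, ← mul_assoc, hc])
    (by
      rw [mul_assoc, ← mul_assoc f, ← hcf, mul_assoc, ← mul_assoc, hfg, mul_zero]) j
  simp only [Polynomial.coeff_C_mul] at key
  calc c * (f.coeff 0 * g.coeff j)
      = c * c * f.coeff 0 * g.coeff j := by rw [hc, mul_assoc]
    _ = c * (f.coeff 0 * c) * g.coeff j := by rw [← hcomm (f.coeff 0), ← mul_assoc]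
    _ = c * f.coeff 0 * (c * g.coeff j) := by rw [mul_assoc, mul_assoc, mul_assoc]
    _ = 0 := key

/-- Let `R` be an Abelian ring. The following are equivalent:
(i) `R` is skew-Armendariz; (ii) for every idempotent `e`, both `eR` and `(1-e)R`
are skew-Armendariz; (iii) for some idempotent `e`, both `eR` and `(1-e)R` are
skew-Armendariz. -/
theorem skewArmendariz_corner_tfae (R : Type*) [Ring R]
    (hAb : ∀ e : R, e * e = e → ∀ r : R, e * r = r * e) :
    [ SkewArmendariz R,
      ∀ e : R, e * e = e →
        CornerSkewArmendariz R e ∧ CornerSkewArmendariz R (1 - e),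
      ∃ e : R, e * e = e ∧
        CornerSkewArmendariz R e ∧ CornerSkewArmendariz R (1 - e) ].TFAE := by
  tfae_have 1 → 2 := by
    intro h e _
    exact ⟨fun f g _ _ hfg j => h f g hfg j, fun f g _ _ hfg j => h f g hfg j⟩
  tfae_have 2 → 3 := by
    intro h
    exact ⟨1, one_mul 1, h 1 (one_mul 1)⟩
  tfae_have 3 → 1 := by
    rintro ⟨e, he, h1, h2⟩ f g hfg j
    have he' : (1 - e) * (1 - e) = 1 - e := by
      rw [one_sub_mul, mul_one_sub, he, sub_self, sub_zero]
    have A := corner_aux e he (hAb e he) h1 f g hfg j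
    have B := corner_aux (1 - e) he' (hAb (1 - e) he') h2 f g hfg j
    rw [sub_mul, one_mul, A, sub_zero] at B
    exact B
  tfae_finish
end
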